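/- arXiv:2107.08583 — 4 statements merged into one kernel-verified Lean document; each statement's English description precedes it below -/
import Mathlib

section
/- Compositional invariants imply safety of the parameterized system: suppose θ_C ⊆ S_C and θ_U ⊆ S_C × S_U satisfy Initialization (c₀ ∈ θ_C and (c₀,u₀) ∈ θ_U), Consecution for synchronized actions (if c ∈ θ_C, (c,u) ∈ θ_U, and (c',u') = T_S(c,u,p), then c' ∈ θ_C and (c',u') ∈ θ_U), Consecution for internal actions (if c ∈ θ_C, (c,u) ∈ θ_U, and c' = T_I(c,p), then c' ∈ θ_C and (c',u) ∈ θ_U), and Non-Interference (if c ∈ θ_C, (c,u) ∈ θ_U, (c,v) ∈ θ_U, and (c',u') = T_S(c,u,p), then (c',v) ∈ θ_U). Then for every N and every state (c, u₁,...,u_N) reachable in the N-user SCUN, c ∈ θ_C and (c, uᵢ) ∈ θ_U for all i. -/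
/-- Reachability in the `N`-user instance of a synchronized control-user
network (SCUN): starting from `(c₀, u₀, …, u₀)`, an internal action updates
only the control state via `TI`, and a synchronized action `(p, i)` updates the
control state and the `i`-th user via `TS`, leaving other users unchanged. -/
inductive ScunReach {SC SU PI PS : Type*}
    (TI : SC → PI → SC) (TS : SC → SU → PS → SC × SU)
    (c₀ : SC) (u₀ : SU) (N : ℕ) : SC × (Fin N → SU) → Prop
  | init : ScunReach TI TS c₀ u₀ N (c₀, fun _ => u₀)
  | internal {c : SC} {u : Fin N → SU} (p : PI) :
      ScunReach TI TS c₀ u₀ N (c, u) → ScunReach TI TS c₀ u₀ N (TI c p, u)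
  | sync {c : SC} {u : Fin N → SU} (p : PS) (i : Fin N) :
      ScunReach TI TS c₀ u₀ N (c, u) →
      ScunReach TI TS c₀ u₀ N
        ((TS c (u i) p).1, Function.update u i (TS c (u i) p).2)

/-! The invariant `θC c ∧ ∀ i, θU c (u i)` is inductive once a ghost user, frozen in state `u₀`,
is added: consecution for internal actions needs some user in `θU` (there may be none when
`N = 0`), and the ghost stays in `θU` by non-interference. A synchronized step of user `i` is
covered by consecution for `i` and by non-interference for everybody else. -/

section CompositionalInvariant

variable {SC SU PI PS : Type*} {TI : SC → PI → SC} {TS : SC → SU → PS → SC × SU}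
  {θC : SC → Prop} {θU : SC → SU → Prop} {u₀ : SU} {N : ℕ} {c : SC} {u : Fin N → SU}

def CompInv (θC : SC → Prop) (θU : SC → SU → Prop) (u₀ : SU) (s : SC × (Fin N → SU)) : Prop :=
  θC s.1 ∧ θU s.1 u₀ ∧ ∀ i, θU s.1 (s.2 i)

theorem CompInv.internal
    (hCons2 : ∀ c u p, θC c → θU c u → θC (TI c p) ∧ θU (TI c p) u)
    (p : PI) (h : CompInv θC θU u₀ (c, u)) : CompInv θC θU u₀ (TI c p, u) := by
  obtain ⟨hc, hu₀, hu⟩ := h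
  exact ⟨(hCons2 c u₀ p hc hu₀).1, (hCons2 c u₀ p hc hu₀).2,
    fun i => (hCons2 c (u i) p hc (hu i)).2⟩

theorem CompInv.sync
    (hCons1 : ∀ c u p, θC c → θU c u →
      θC (TS c u p).1 ∧ θU (TS c u p).1 (TS c u p).2)
    (hNonInt : ∀ c u v p, θC c → θU c u → θU c v → θU (TS c u p).1 v)
    (p : PS) (i : Fin N) (h : CompInv θC θU u₀ (c, u)) :
    CompInv θC θU u₀ ((TS c (u i) p).1, Function.update u i (TS c (u i) p).2) := by
  obtain ⟨hc, hu₀, hu⟩ := h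
  obtain ⟨hc', hui'⟩ := hCons1 c (u i) p hc (hu i)
  refine ⟨hc', hNonInt c (u i) u₀ p hc (hu i) hu₀, ?_⟩
  exact (Function.forall_update_iff u fun _ v => θU (TS c (u i) p).1 v).2
    ⟨hui', fun j _ => hNonInt c (u i) (u j) p hc (hu i) (hu j)⟩

theorem ScunReach.compInv {c₀ : SC}
    (hInit : θC c₀ ∧ θU c₀ u₀)
    (hCons1 : ∀ c u p, θC c → θU c u →
      θC (TS c u p).1 ∧ θU (TS c u p).1 (TS c u p).2)
    (hCons2 : ∀ c u p, θC c → θU c u → θC (TI c p) ∧ θU (TI c p) u)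
    (hNonInt : ∀ c u v p, θC c → θU c u → θU c v → θU (TS c u p).1 v)
    {s : SC × (Fin N → SU)} (h : ScunReach TI TS c₀ u₀ N s) : CompInv θC θU u₀ s := by
  induction h with
  | init => exact ⟨hInit.1, hInit.2, fun _ => hInit.2⟩
  | internal p _ ih => exact ih.internal hCons2 p
  | sync p i _ ih => exact ih.sync hCons1 hNonInt p i

end CompositionalInvariant

/-- Compositional invariants imply safety of the parameterized system: if
`θC, θU` satisfy Initialization, Consecution for synchronized and internal
actions, and Non-Interference, then in every `N`-user SCUN instance, every
reachable state `(c, u)` satisfies `θC c` and `θU c (u i)` for every user. -/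
theorem stmt_7 {SC SU PI PS : Type*}
    (TI : SC → PI → SC) (TS : SC → SU → PS → SC × SU)
    (c₀ : SC) (u₀ : SU)
    (θC : SC → Prop) (θU : SC → SU → Prop)
    (hInit : θC c₀ ∧ θU c₀ u₀)
    (hCons1 : ∀ c u p, θC c → θU c u →
      θC (TS c u p).1 ∧ θU (TS c u p).1 (TS c u p).2)
    (hCons2 : ∀ c u p, θC c → θU c u → θC (TI c p) ∧ θU (TI c p) u)
    (hNonInt : ∀ c u v p, θC c → θU c u → θU c v →
      θU (TS c u p).1 v) :
    ∀ (N : ℕ) (c : SC) (u : Fin N → SU),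
      ScunReach TI TS c₀ u₀ N (c, u) → θC c ∧ ∀ i, θU c (u i) := by
  intro N c u h
  obtain ⟨hc, -, hu⟩ := h.compInv hInit hCons1 hCons2 hNonInt
  exact ⟨hc, hu⟩
end

section
/- If for every action p and every pair of addresses x, y not in the implicit set I the transition function satisfies f(swap(s,x,y), swap(p,x,y)) = swap(f(s,p), x, y), then safety of any address-oblivious 1-universal property φ guarded only by literals in I is preserved under relabeling of non-implicit addresses: for any permutation σ of ℕ fixing I pointwise, a state s violates φ iff σ(s) violates φ. -/
/-- States reachable from a given state `s` under the transition function `f`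
(by finitely many actions). -/
inductive ReachFrom {ι κ : Type*} (f : (ι → ℕ) → (κ → ℕ) → (ι → ℕ))
    (s : ι → ℕ) : (ι → ℕ) → Prop
  | refl : ReachFrom f s s
  | step {t : ι → ℕ} (p : κ → ℕ) : ReachFrom f s t → ReachFrom f s (f t p)

/-!
Relabelings for which the transition function is equivariant form a subgroup of the
permutation group. A finitely supported permutation fixing `I` pointwise is a product of
transpositions of addresses outside `I`, so it lies in that subgroup, and equivariance carries
every run from `s` to a run from `π ∘ s`. Applying this to `π` and `π⁻¹`, together with the
invariance of `φ`, transports violations in both directions.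
-/

open Equiv MulAction

namespace Equiv.Perm

variable {α : Type*}

def equivariantSubgroup {ι κ : Type*} (f : (ι → α) → (κ → α) → (ι → α)) :
    Subgroup (Perm α) where
  carrier := {π | ∀ s p, f (π ∘ s) (π ∘ p) = π ∘ f s p}
  one_mem' _ _ := rfl
  mul_mem' {π σ} hπ hσ s p := by
    change f (⇑π ∘ ⇑σ ∘ s) (⇑π ∘ ⇑σ ∘ p) = ⇑π ∘ ⇑σ ∘ f s p
    rw [hπ (⇑σ ∘ s) (⇑σ ∘ p), hσ s p]
  inv_mem' {π} hπ s p := by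
    have h := hπ (⇑π⁻¹ ∘ s) (⇑π⁻¹ ∘ p)
    simp only [← Function.comp_assoc, ← coe_mul, mul_inv_cancel, coe_one,
      Function.id_comp] at h
    rw [h, ← Function.comp_assoc, ← coe_mul, inv_mul_cancel, coe_one, Function.id_comp]

variable [DecidableEq α]

def swapsOutside (I : Set α) : Set (Perm α) :=
  {σ | ∃ x y, x ∉ I ∧ y ∉ I ∧ x ≠ y ∧ σ = swap x y}

theorem mem_closure_swapsOutside {I : Set α} {π : Perm α} (hfin : {a | π a ≠ a}.Finite)
    (hI : ∀ a ∈ I, π a = a) : π ∈ Subgroup.closure (swapsOutside I) := by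
  refine (mem_closure_isSwap ?_).2 ⟨hfin, fun x ↦ ?_⟩
  · rintro _ ⟨x, y, -, -, hxy, rfl⟩
    exact ⟨x, y, hxy, rfl⟩
  by_cases hx : π x = x
  · rw [hx]
    exact mem_orbit_self x
  have hxI : x ∉ I := fun h ↦ hx (hI x h)
  have hπxI : π x ∉ I := fun h ↦ hx (π.injective (hI _ h))
  exact ⟨⟨swap (π x) x, Subgroup.subset_closure ⟨π x, x, hπxI, hxI, hx, rfl⟩⟩,
    swap_apply_right _ _⟩

end Equiv.Perm

open Equiv.Perm

theorem ReachFrom.perm_comp {ι κ : Type*} {f : (ι → ℕ) → (κ → ℕ) → (ι → ℕ)} {π : Perm ℕ}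
    (hπ : π ∈ equivariantSubgroup f) {s t : ι → ℕ} (h : ReachFrom f s t) :
    ReachFrom f (⇑π ∘ s) (⇑π ∘ t) := by
  induction h with
  | refl => exact .refl
  | step p _ ih => rw [← hπ]; exact .step _ ih

/-- If the transition function commutes with every swap of two addresses
outside the implicit set `I` (acting on both states and actions), and the
`1`-universal property `φ` is address-oblivious apart from guards over literals
in `I` (so `φ` is invariant under every finitely supported permutation of `ℕ`
fixing `I` pointwise), then safety is preserved under relabeling of
non-implicit addresses: for every such permutation `π` and every state `s`,
`s` can reach a violation of `φ` iff `π(s)` can reach a violation of `φ`. -/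
theorem stmt_14 {ι κ : Type*} (I : Set ℕ)
    (f : (ι → ℕ) → (κ → ℕ) → (ι → ℕ)) (φ : (ι → ℕ) → Prop)
    (hcomm : ∀ x y : ℕ, x ∉ I → y ∉ I → ∀ (s : ι → ℕ) (p : κ → ℕ),
      f ((Equiv.swap x y) ∘ s) ((Equiv.swap x y) ∘ p) =
        (Equiv.swap x y) ∘ f s p)
    (hφ : ∀ π : Equiv.Perm ℕ, {a | π a ≠ a}.Finite → (∀ a ∈ I, π a = a) →
      ∀ s : ι → ℕ, (φ (⇑π ∘ s) ↔ φ s)) :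
    ∀ π : Equiv.Perm ℕ, {a | π a ≠ a}.Finite → (∀ a ∈ I, π a = a) →
      ∀ s : ι → ℕ,
        (∃ t, ReachFrom f s t ∧ ¬ φ t) ↔
        (∃ t, ReachFrom f (⇑π ∘ s) t ∧ ¬ φ t) := by
  intro π hfin hI s
  have hπ : π ∈ equivariantSubgroup f := by
    refine (Subgroup.closure_le _).2 ?_ (mem_closure_swapsOutside hfin hI)
    rintro _ ⟨x, y, hx, hy, -, rfl⟩
    exact hcomm x y hx hy
  constructor
  · rintro ⟨t, hst, ht⟩
    exact ⟨⇑π ∘ t, hst.perm_comp hπ, by rwa [hφ π hfin hI]⟩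
  · rintro ⟨t, hst, ht⟩
    refine ⟨⇑π⁻¹ ∘ t, ?_, ?_⟩
    · simpa [← Function.comp_assoc] using hst.perm_comp (inv_mem hπ)
    · rwa [← hφ π hfin hI, ← Function.comp_assoc, ← coe_mul, mul_inv_cancel, coe_one,
        Function.id_comp]
end

section
/- In the Auction transition system instrumented with a sum field, the invariant 'leadingBid ≤ _sum' is inductive under the interference-augmented semantics: assuming each individual bid b satisfies the split predicate (b ≤ leadingBid) ∧ (b ≠ leadingBid → b + leadingBid ≤ _sum), every transition (bid, withdraw, stop) from a state satisfying leadingBid ≤ _sum leads to a state satisfying leadingBid ≤ _sum. -/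
/-!
A bid replaces the representative's old bid `b` by `amount` in the sum; since
`b ≤ leadingBid ≤ _sum`, the truncated subtraction `_sum + amount - b` is exact and
stays above `amount`. A withdrawal removes `b` from the sum, but it is only enabled
when `b ≠ leadingBid`, and then `θU` gives exactly the slack `b + leadingBid ≤ _sum`.
-/

/-- State of the sum-instrumented Auction with a single representative user:
the leading bid, the instrumented sum of all bids, the stopped flag, and the
representative user's bid `b`. -/
structure IState where
  leadingBid : ℕ
  sum : ℕ
  stopped : Bool
  b : ℕ

/-- The split interference predicate for the representative bid:
`b ≤ leadingBid`, and if `b ≠ leadingBid` then `b + leadingBid ≤ _sum`. -/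
def θU (s : IState) : Prop :=
  s.b ≤ s.leadingBid ∧ (s.b ≠ s.leadingBid → s.b + s.leadingBid ≤ s.sum)

/-- `bid(amount)`: requires `¬stopped` and `amount > leadingBid`; updates
`_sum := _sum + amount - b`, `b := amount`, `leadingBid := amount`. -/
def ibidT (amount : ℕ) (s : IState) : IState :=
  if s.stopped = false ∧ amount > s.leadingBid then
    { leadingBid := amount, sum := s.sum + amount - s.b, stopped := s.stopped,
      b := amount }
  else s

/-- `withdraw`: requires `¬stopped` and `b ≠ leadingBid`; updates
`_sum := _sum - b` and `b := 0`. -/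
def iwithdrawT (s : IState) : IState :=
  if s.stopped = false ∧ s.b ≠ s.leadingBid then
    { s with sum := s.sum - s.b, b := 0 }
  else s

/-- `stop`: sets `stopped := true`. -/
def istopT (s : IState) : IState :=
  { s with stopped := true }

/-- One transition of the instrumented Auction. -/
def IStep (s s' : IState) : Prop :=
  (∃ amount, s' = ibidT amount s) ∨ s' = iwithdrawT s ∨ s' = istopT s

theorem ibidT_leadingBid_le_sum (amount : ℕ) {s : IState} (hb : s.b ≤ s.leadingBid)
    (hinv : s.leadingBid ≤ s.sum) : (ibidT amount s).leadingBid ≤ (ibidT amount s).sum := by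
  unfold ibidT
  split_ifs
  · dsimp only
    omega
  · exact hinv

theorem iwithdrawT_leadingBid_le_sum {s : IState}
    (hslack : s.b ≠ s.leadingBid → s.b + s.leadingBid ≤ s.sum)
    (hinv : s.leadingBid ≤ s.sum) : (iwithdrawT s).leadingBid ≤ (iwithdrawT s).sum := by
  unfold iwithdrawT
  split_ifs with hguard
  · dsimp only
    have hsum := hslack hguard.2
    omega
  · exact hinv

/-- The invariant `leadingBid ≤ _sum` is inductive under the
interference-augmented semantics: assuming the representative bid satisfies the
split predicate `θU`, every transition (bid, withdraw, stop) from a state with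
`leadingBid ≤ _sum` leads to a state with `leadingBid ≤ _sum`. -/
theorem stmt_16 (s s' : IState) (hθ : θU s)
    (hinv : s.leadingBid ≤ s.sum) (hstep : IStep s s') :
    s'.leadingBid ≤ s'.sum := by
  obtain ⟨hb, hslack⟩ := hθ
  rcases hstep with ⟨amount, rfl⟩ | rfl | rfl
  · exact ibidT_leadingBid_le_sum amount hb hinv
  · exact iwithdrawT_leadingBid_le_sum hslack hinv
  · exact hinv
end

section
/- If (E, T, I) over-approximates the participation topology of every transaction of a contract and a does not appear in view(E,T,I,s,p) = {client(p,i) | i ∈ E} ∪ {role(s,i) | i ∈ T} ∪ I, then applying the transaction f_p at state (s,u) leaves every user with address a unchanged. -/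
section
variable {C U P : Type*} {N : ℕ} (idU : U → ℕ)
variable (client : P → ℕ → ℕ) (role : C → ℕ → ℕ)
variable (f : P → C × (Fin N → U) → C × (Fin N → U))

/-- Address `a` influences the transaction `f_p`, witnessed by control state
`s`: two user configurations differing exactly in the user with address `a`
have images under `f_p` differing in the control state or in another user. -/
def InflWitness (p : P) (a : ℕ) (s : C) : Prop :=
  ∃ (u v : Fin N → U) (i : Fin N),
    idU (u i) = a ∧
    (∀ j, u j = v j ↔ i ≠ j) ∧
    ((f p (s, u)).1 = (f p (s, v)).1 →
      ∃ j, j ≠ i ∧ (f p (s, u)).2 j ≠ (f p (s, v)).2 j)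

/-- The transaction `f_p` influences address `a`, witnessed by control state
`s`: applying `f_p` at `s` changes the user with address `a`. -/
def InfldWitness (p : P) (a : ℕ) (s : C) : Prop :=
  ∃ (u : Fin N → U) (i : Fin N), idU (u i) = a ∧ (f p (s, u)).2 i ≠ u i

/-- Address `a` participates in `f_p` with witness state `s`. -/
def PartWitness (p : P) (a : ℕ) (s : C) : Prop :=
  InflWitness idU f p a s ∨ InfldWitness idU f p a s

/-- `(E, T, I)` over-approximates the participation topology of every
transaction: client indices of explicit participants lie in `E`, role indices
of transient participants lie in `T`, and implicit participants lie in `I`. -/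
def OverApprox (E T I : Set ℕ) : Prop :=
  (∀ (p : P) (i : ℕ) (a : ℕ),
    ((∃ s, PartWitness idU f p a s) ∧ client p i = a) → i ∈ E) ∧
  (∀ (p : P) (i : ℕ) (a : ℕ),
    (∃ s, PartWitness idU f p a s ∧ role s i = a) → i ∈ T) ∧
  (∀ (p : P) (a : ℕ),
    (∃ s, PartWitness idU f p a s ∧ ∀ i, role s i ≠ a ∧ client p i ≠ a) →
      a ∈ I)

/-- The view of `(E, T, I)` at state `s` and action `p`:
`{client(p,i) | i ∈ E} ∪ {role(s,i) | i ∈ T} ∪ I`. -/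
def view (E T I : Set ℕ) (s : C) (p : P) : Set ℕ :=
  {x | ∃ i ∈ E, client p i = x} ∪ {x | ∃ i ∈ T, role s i = x} ∪ I

theorem mem_view_of_partWitness {E T I : Set ℕ} (hover : OverApprox idU client role f E T I)
    {s : C} {p : P} {a : ℕ} (hpart : PartWitness idU f p a s) :
    a ∈ view client role E T I s p := by
  obtain ⟨hE, hT, hI⟩ := hover
  by_cases hc : ∃ i, client p i = a
  · obtain ⟨i, hi⟩ := hc
    exact Or.inl (Or.inl ⟨i, hE p i a ⟨⟨s, hpart⟩, hi⟩, hi⟩)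
  by_cases hr : ∃ i, role s i = a
  · obtain ⟨i, hi⟩ := hr
    exact Or.inl (Or.inr ⟨i, hT p i a ⟨s, hpart, hi⟩, hi⟩)
  push Not at hc hr
  exact Or.inr (hI p a ⟨s, hpart, fun i => ⟨hr i, hc i⟩⟩)

/-- If `(E, T, I)` over-approximates the participation topology of every
transaction and `a ∉ view(E, T, I, s, p)`, then applying the transaction `f_p`
at `(s, u)` leaves every user with address `a` unchanged. -/
theorem stmt_19 (E T I : Set ℕ)
    (hover : OverApprox idU client role f E T I)
    (s : C) (p : P) (u : Fin N → U) (a : ℕ)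
    (hnotin : a ∉ view client role E T I s p) :
    ∀ i : Fin N, idU (u i) = a → (f p (s, u)).2 i = u i := by
  intro i hid
  by_contra hne
  exact hnotin (mem_view_of_partWitness idU client role f hover (Or.inr ⟨u, i, hid, hne⟩))

end
end
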